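/- Target ordering yields collision-free placement: let t₀, …, t_{n−1} ∈ ℤ² be distinct target points, all with y-coordinate ≥ 1, ordered so that i < j implies t_i has strictly larger y-coordinate than t_j, or equal y-coordinate and strictly larger x-coordinate. If robots at (1,−1), …, (n−1,−1) move one at a time in the order r_{1}, r_{2}, … (robot r_k moving to its target via the path: up to y = 0, up to the line y = t(y)−1, horizontally to (t(x), t(y)−1), up to t), then at no time do two robots occupy the same grid point. -/
import Mathlib


/-- Target ordering yields collision-free placement: when the `k`-th robot
(starting from `(k, -1)`) moves to its target `t (k-1)` via the canonical path
(up to `y = 0`, up the column to the row below its target, horizontally, then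
up into the target), its path avoids the leader at `(0,-1)`, the robots still
waiting on the line `y = -1`, and the robots already placed at
`t 0, …, t (k-2)`. -/
theorem target_formation_no_collision (n : ℕ) (t : ℕ → ℤ × ℤ)
    (hinj : ∀ i j, i < n → j < n → t i = t j → i = j)
    (hy : ∀ i, i < n → 1 ≤ (t i).2)
    (horder : ∀ i j, i < j → j < n →
      (t j).2 < (t i).2 ∨ ((t i).2 = (t j).2 ∧ (t j).1 < (t i).1))
    (k : ℕ) (hk1 : 1 ≤ k) (hkn : k < n) :
    ∀ p ∈ ({((k : ℤ), (-1 : ℤ))} ∪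
           {p : ℤ × ℤ | p.1 = (k : ℤ) ∧ 0 ≤ p.2 ∧ p.2 ≤ (t (k - 1)).2 - 1} ∪
           {p : ℤ × ℤ | p.2 = (t (k - 1)).2 - 1 ∧
             min (k : ℤ) (t (k - 1)).1 ≤ p.1 ∧ p.1 ≤ max (k : ℤ) (t (k - 1)).1} ∪
           {t (k - 1)} : Set (ℤ × ℤ)),
      p ∉ ({((0 : ℤ), (-1 : ℤ))} ∪
           {p : ℤ × ℤ | ∃ j : ℕ, k < j ∧ j < n ∧ p = ((j : ℤ), (-1 : ℤ))} ∪
           {p : ℤ × ℤ | ∃ j : ℕ, j < k - 1 ∧ p = t j} : Set (ℤ × ℤ)) := by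
  intro p hp hob
  have hkn' : k - 1 < n := Nat.lt_of_le_of_lt (Nat.sub_le k 1) hkn
  have hyk : 1 ≤ (t (k - 1)).2 := hy _ hkn'
  simp only [Set.mem_union, Set.mem_singleton_iff, Set.mem_setOf_eq] at hp hob
  rcases hp with ((hA | hB) | hC) | hD
  · subst hA
    rcases hob with (h | ⟨j, hj1, hj2, hj3⟩) | ⟨j, hj1, hj2⟩
    · simp only [Prod.mk.injEq] at h; omega
    · simp only [Prod.mk.injEq] at hj3; omega
    · have h2 : (t j).2 = -1 := by rw [← hj2]
      have := hy j (by omega); omega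
  · obtain ⟨hB1, hB2, hB3⟩ := hB
    rcases hob with (h | ⟨j, hj1, hj2, hj3⟩) | ⟨j, hj1, hj2⟩
    · have := congrArg Prod.snd h; simp at this; omega
    · have := congrArg Prod.snd hj3; simp at this; omega
    · have h2 : (t j).2 = p.2 := by rw [← hj2]
      rcases horder j (k - 1) (by omega) hkn' with h | ⟨h, _⟩ <;> omega
  · obtain ⟨hC1, hC2, hC3⟩ := hC
    rcases hob with (h | ⟨j, hj1, hj2, hj3⟩) | ⟨j, hj1, hj2⟩
    · have := congrArg Prod.snd h; simp at this; omega
    · have := congrArg Prod.snd hj3; simp at this; omega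
    · have h2 : (t j).2 = p.2 := by rw [← hj2]
      rcases horder j (k - 1) (by omega) hkn' with h | ⟨h, _⟩ <;> omega
  · subst hD
    rcases hob with (h | ⟨j, hj1, hj2, hj3⟩) | ⟨j, hj1, hj2⟩
    · have := congrArg Prod.snd h; simp at this; omega
    · have := congrArg Prod.snd hj3; simp at this; omega
    · have := hinj j (k - 1) (by omega) hkn' hj2.symm; omega
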